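/- arXiv:1303.2191 — 6 statements merged into one kernel-verified Lean document; each statement's English description precedes it below -/
import Mathlib

section
/- Let G : ℝ → ℝ be differentiable and suppose z_E is the unique real number with G'(z_E) = 0. Let τ_u < τ_l, and let z, k_z : [τ_u, τ_l] → ℝ with z differentiable satisfying z'(τ) = k_z(τ), k_z continuous on [τ_u, τ_l] and differentiable on (τ_u, τ_l) with k_z'(τ) = (1/2)·G'(z(τ)), k_z(τ_u) = k_z(τ_l) = 0, and k_z(τ) ≠ 0 for all τ ∈ (τ_u, τ_l). If z(τ_u) = z_u, z(τ_l) = z_l and z_u < z_l, then z_u < z_E < z_l. -/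
/-!
Rolle's theorem applied to `k_z` gives an interior time at which `G'(z) = 0`, so the ray passes
through `z_E` strictly between its turning times. By Darboux's theorem `k_z = z'` keeps one sign
between the turning points, so `z` is strictly monotone there, increasing because `z_u < z_l`;
hence `z_u < z_E < z_l`.
-/

open Set

theorem strictMonoOn_Icc_of_hasDerivAt_ne_zero {f f' : ℝ → ℝ} {a b : ℝ} (hfab : f a < f b)
    (hf : ∀ x ∈ Icc a b, HasDerivAt f (f' x) x) (hf' : ∀ x ∈ Ioo a b, f' x ≠ 0) :
    StrictMonoOn f (Icc a b) := by
  rcases lt_or_ge b a with hba | hab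
  · exact (Icc_eq_empty_of_lt hba ▸ subsingleton_empty).strictMonoOn f
  have hcont : ContinuousOn f (Icc a b) := fun x hx => (hf x hx).continuousAt.continuousWithinAt
  have hderiv : ∀ x ∈ Ioo a b, deriv f x = f' x := fun x hx => (hf x (Ioo_subset_Icc_self hx)).deriv
  rcases hasDerivWithinAt_forall_lt_or_forall_gt_of_forall_ne (convex_Ioo a b)
      (fun x hx => (hf x (Ioo_subset_Icc_self hx)).hasDerivWithinAt) hf' with hneg | hpos
  · have hanti : StrictAntiOn f (Icc a b) := strictAntiOn_of_deriv_neg (convex_Icc a b) hcont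
      (by rw [interior_Icc]; exact fun x hx => hderiv x hx ▸ hneg x hx)
    have hne : a ≠ b := by rintro rfl; exact hfab.false
    exact absurd (hanti (left_mem_Icc.2 hab) (right_mem_Icc.2 hab) (hab.lt_of_ne hne)) hfab.asymm
  · exact strictMonoOn_of_deriv_pos (convex_Icc a b) hcont
      (by rw [interior_Icc]; exact fun x hx => hderiv x hx ▸ hpos x hx)

theorem cor_turning_points_partition_depth_general
    (G z kz : ℝ → ℝ)
    (zE : ℝ)
    (huniq : ∀ w : ℝ, deriv G w = 0 → w = zE)
    (τu τl : ℝ) (hττ : τu < τl)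
    (hz : ∀ τ ∈ Set.Icc τu τl, HasDerivAt z (kz τ) τ)
    (hkc : ContinuousOn kz (Set.Icc τu τl))
    (hkd : ∀ τ ∈ Set.Ioo τu τl, HasDerivAt kz ((1 / 2) * deriv G (z τ)) τ)
    (hu : kz τu = 0) (hl : kz τl = 0)
    (hne : ∀ τ ∈ Set.Ioo τu τl, kz τ ≠ 0)
    (zu zl : ℝ) (hzu : z τu = zu) (hzl : z τl = zl) (hul : zu < zl) :
    zu < zE ∧ zE < zl := by
  obtain ⟨c, hc, hc0⟩ := exists_hasDerivAt_eq_zero hττ hkc (hu.trans hl.symm) hkd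
  have hzc : z c = zE := huniq _ (by simpa using hc0)
  have hmono : StrictMonoOn z (Icc τu τl) :=
    strictMonoOn_Icc_of_hasDerivAt_ne_zero (hzu ▸ hzl ▸ hul) hz hne
  subst hzu hzl hzc
  exact ⟨hmono (left_mem_Icc.2 hττ.le) (Ioo_subset_Icc_self hc) hc.1,
    hmono (Ioo_subset_Icc_self hc) (right_mem_Icc.2 hττ.le) hc.2⟩

/-- Corollary 1 (first part): if `z_E` is the unique depth where
`G'(z_E) = 0` (with `G z = (ω² - ω_ac²(z))/c²(z)`, so `∂H/∂z = 0` at `z_E`),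
then for every ray with distinct upper and lower turning point depths
`z_u < z_l` one has `z_u < z_E < z_l`. Along the ray `z' = k_z` and
`k_z' = (1/2) G'(z)`, and `k_z` vanishes exactly at the endpoints. -/
theorem cor_turning_points_partition_depth
    (G z kz : ℝ → ℝ) (hG : Differentiable ℝ G)
    (zE : ℝ) (hzE : deriv G zE = 0)
    (huniq : ∀ w : ℝ, deriv G w = 0 → w = zE)
    (τu τl : ℝ) (hττ : τu < τl)
    (hz : ∀ τ ∈ Set.Icc τu τl, HasDerivAt z (kz τ) τ)
    (hkc : ContinuousOn kz (Set.Icc τu τl))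
    (hkd : ∀ τ ∈ Set.Ioo τu τl, HasDerivAt kz ((1 / 2) * deriv G (z τ)) τ)
    (hu : kz τu = 0) (hl : kz τl = 0)
    (hne : ∀ τ ∈ Set.Ioo τu τl, kz τ ≠ 0)
    (zu zl : ℝ) (hzu : z τu = zu) (hzl : z τl = zl) (hul : zu < zl) :
    zu < zE ∧ zE < zl :=
  cor_turning_points_partition_depth_general G z kz zE huniq τu τl hττ hz hkc hkd hu hl hne zu zl
    hzu hzl hul
end

section
/- Let g > 0, m > 0, ω > 0 and set z_E = g(m+2)/(2ω²) and k_h = ω²·√(m/(g²(m+2))) (so that k_h² = (ω² − ω_ac²(z_E))/c²(z_E) = mω⁴/(g²(m+2)) > 0). Then for any x₀, t₀ ∈ ℝ, the functions x(τ) = x₀ + k_h·τ, z(τ) = z_E, t(τ) = t₀ + (ωm/(g·z_E))·τ, together with constant k_h, k_z(τ) = 0 and constant ω, satisfy the characteristic system dx/dτ = k_h, dz/dτ = k_z, dt/dτ = ω/c²(z), dk_h/dτ = 0, dk_z/dτ = (1/2)·d/dz[(ω² − ω_ac²(z))/c²(z)] evaluated at z(τ), dω/dτ = 0, as well as the dispersion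 relation k_h² + k_z² = (ω² − ω_ac²(z))/c²(z). Hence the ray starting at depth z_E with this horizontal wavenumber propagates horizontally. -/
/-!
The dispersion relation reads `k_h² + k_z² = K(z)` with
`K(z) = (ω² - ω_ac²(z))/c²(z) = mω²/(gz) - m(m+2)/(4z²)`, whose derivative
`m(g(m+2) - 2ω²z)/(2gz³)` vanishes exactly at the partition depth `z_E = g(m+2)/(2ω²)`.
So at `z_E`, with `k_h² = K(z_E)` and `k_z = 0`, the force term `K'(z)/2` driving `k_z`
vanishes and the ray stays at depth `z_E`; the remaining equations describe uniform
motion in `x` and `t`.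
-/

open Real

lemma hasDerivAt_of_eq_affine {f : ℝ → ℝ} {a b : ℝ} (hf : ∀ τ, f τ = a + b * τ) (τ : ℝ) :
    HasDerivAt f b τ := by
  rw [funext hf]
  simpa using ((hasDerivAt_id τ).const_mul b).const_add a

lemma hasDerivAt_of_eq_const {f : ℝ → ℝ} {a : ℝ} (hf : ∀ τ, f τ = a) (τ : ℝ) :
    HasDerivAt f 0 τ := by
  rw [funext hf]
  exact hasDerivAt_const τ a

/-- `K(z) = (ω² - ω_ac²(z))/c²(z)` for the polytrope. -/
noncomputable def polytropeK (g m ω z : ℝ) : ℝ := (ω ^ 2 - g * (m + 2) / (4 * z)) / (g * z / m)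

lemma hasDerivAt_polytropeK {g m ω z : ℝ} (hg : g ≠ 0) (hm : m ≠ 0) (hz : z ≠ 0) :
    HasDerivAt (polytropeK g m ω) (m * (g * (m + 2) - 2 * ω ^ 2 * z) / (2 * g * z ^ 3)) z := by
  have hK : polytropeK g m ω = fun w => m * ω ^ 2 / g * w⁻¹ - m * (m + 2) / 4 * (w ^ 2)⁻¹ := by
    funext w
    rcases eq_or_ne w 0 with rfl | hw
    · simp [polytropeK]
    · rw [polytropeK]
      field_simp
  rw [hK]
  refine (((hasDerivAt_inv hz).const_mul (m * ω ^ 2 / g)).sub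
    (((hasDerivAt_pow 2 z).inv (pow_ne_zero 2 hz)).const_mul (m * (m + 2) / 4))).congr_deriv ?_
  field_simp
  ring

lemma deriv_polytropeK_partitionDepth {g m ω : ℝ} (hg : g ≠ 0) (hm : m ≠ 0) (hm2 : m + 2 ≠ 0)
    (hω : ω ≠ 0) : deriv (polytropeK g m ω) (g * (m + 2) / (2 * ω ^ 2)) = 0 := by
  have hzE : g * (m + 2) / (2 * ω ^ 2) ≠ 0 := div_ne_zero (mul_ne_zero hg hm2) (by positivity)
  have hcrit : 2 * ω ^ 2 * (g * (m + 2) / (2 * ω ^ 2)) = g * (m + 2) :=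
    mul_div_cancel₀ _ (by positivity)
  rw [(hasDerivAt_polytropeK hg hm hzE).deriv, hcrit, sub_self, mul_zero, zero_div]

lemma polytropeK_partitionDepth {g m ω : ℝ} (hg : g ≠ 0) (hm : m ≠ 0) (hm2 : m + 2 ≠ 0)
    (hω : ω ≠ 0) : polytropeK g m ω (g * (m + 2) / (2 * ω ^ 2)) = m * ω ^ 4 / (g ^ 2 * (m + 2)) := by
  rw [polytropeK]
  field_simp
  ring

/-- Corollary 1 (second part), for the polytrope `c²(z) = gz/m`,
`ω_ac²(z) = g(m+2)/(4z)`: the ray starting at the partition depth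
`z_E = g(m+2)/(2ω²)` with horizontal wavenumber
`k_h = ω²√(m/(g²(m+2)))` (so `k_h² = (ω² - ω_ac²(z_E))/c²(z_E)`)
propagates horizontally: the constant-depth curve solves the full
characteristic system and the dispersion relation. -/
theorem horizontal_ray_at_partition_depth
    (g m ω : ℝ) (hg : 0 < g) (hm : 0 < m) (hω : 0 < ω)
    (x0 t0 : ℝ)
    (zE kh : ℝ)
    (hzE : zE = g * (m + 2) / (2 * ω ^ 2))
    (hkh : kh = ω ^ 2 * Real.sqrt (m / (g ^ 2 * (m + 2))))
    (c2 ωac2 : ℝ → ℝ)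
    (hc2 : ∀ z, c2 z = g * z / m)
    (hωac2 : ∀ z, ωac2 z = g * (m + 2) / (4 * z))
    (x z t khf kzf ωf : ℝ → ℝ)
    (hx : ∀ τ, x τ = x0 + kh * τ)
    (hz : ∀ τ, z τ = zE)
    (ht : ∀ τ, t τ = t0 + (ω * m / (g * zE)) * τ)
    (hkhf : ∀ τ, khf τ = kh)
    (hkzf : ∀ τ, kzf τ = 0)
    (hωf : ∀ τ, ωf τ = ω) :
    kh ^ 2 = m * ω ^ 4 / (g ^ 2 * (m + 2)) ∧
    (∀ τ : ℝ, HasDerivAt x (khf τ) τ) ∧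
    (∀ τ : ℝ, HasDerivAt z (kzf τ) τ) ∧
    (∀ τ : ℝ, HasDerivAt t (ωf τ / c2 (z τ)) τ) ∧
    (∀ τ : ℝ, HasDerivAt khf 0 τ) ∧
    (∀ τ : ℝ, HasDerivAt kzf
      ((1 / 2) * deriv (fun w => (ω ^ 2 - ωac2 w) / c2 w) (z τ)) τ) ∧
    (∀ τ : ℝ, HasDerivAt ωf 0 τ) ∧
    (∀ τ : ℝ, (khf τ) ^ 2 + (kzf τ) ^ 2 = (ω ^ 2 - ωac2 (z τ)) / c2 (z τ)) := by
  have hK : (fun w => (ω ^ 2 - ωac2 w) / c2 w) = polytropeK g m ω :=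
    funext fun w => by rw [hωac2, hc2, polytropeK]
  have hkh2 : kh ^ 2 = m * ω ^ 4 / (g ^ 2 * (m + 2)) := by
    rw [hkh, mul_pow, sq_sqrt (by positivity)]
    ring
  refine ⟨hkh2, fun τ => ?_, fun τ => ?_, fun τ => ?_, hasDerivAt_of_eq_const hkhf,
    fun τ => ?_, hasDerivAt_of_eq_const hωf, fun τ => ?_⟩
  · exact hkhf τ ▸ hasDerivAt_of_eq_affine hx τ
  · exact hkzf τ ▸ hasDerivAt_of_eq_const hz τ
  · rw [hωf, hz, hc2, div_div_eq_mul_div]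
    exact hasDerivAt_of_eq_affine ht τ
  · rw [hK, hz, hzE, deriv_polytropeK_partitionDepth hg.ne' hm.ne' (by positivity) hω.ne',
      mul_zero]
    exact hasDerivAt_of_eq_const hkzf τ
  · rw [hkhf, hkzf, hz, show (ω ^ 2 - ωac2 zE) / c2 zE = polytropeK g m ω zE from congrFun hK zE,
      hzE, polytropeK_partitionDepth hg.ne' hm.ne' (by positivity) hω.ne', hkh2]
    ring
end

section
/- Let g > 0, m > 0, ω > 0, k_h > 0, set a = ω²m/(2k_h²g), suppose b² := a² − m(m+2)/(4k_h²) ≥ 0 and let b = √(b²). Let λ = k_h·g/(ω·m), α₀, C_x ∈ ℝ, and define on an interval I on which z(t) > 0: α(t) = λ·t + α₀, z(t) = a + b·sin(α(t)), x(t) = (ω/(2k_h))·t − b·cos(α(t)) + C_x, and k_z(t) = k_h·b·cos(α(t))/z(t). Then for all t ∈ I: (i) dz/dt = (g·z(t)/(ω·m))·k_z(t); (ii) dx/dt = (g·z(t)/(ω·m))·k_h; (iii) k_h² + k_z(t)² = (ω² − ω_ac²(z(t)))/c²(z(t)). -/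
/-!
The phase `α` advances at the constant rate `λ`, so (i) is the chain rule and (ii) reduces to
`λ a = ω / (2 k_h)`. Multiplied by `z c²(z)`, the dispersion relation (iii) becomes an equation
whose only quadratic part `z² + (b cos α)²` equals `2 a z - (a² - b²)` on the circle
`z = a + b sin α`; the remaining linear identity is the definition of `a` and `b`.
-/

open Real

section PolytropeAlgebra

variable {g m ω kh a b : ℝ}

theorem polytrope_rate_mul_center (hg : g ≠ 0) (hm : m ≠ 0) (hω : ω ≠ 0) (hkh : kh ≠ 0)
    (ha : a = ω ^ 2 * m / (2 * kh ^ 2 * g)) :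
    kh * g / (ω * m) * a = ω / (2 * kh) := by
  rw [ha]
  field_simp

theorem sq_add_sin_add_sq_mul_cos (θ : ℝ) :
    (a + b * sin θ) ^ 2 + (b * cos θ) ^ 2 = 2 * a * (a + b * sin θ) - (a ^ 2 - b ^ 2) := by
  linear_combination b ^ 2 * sin_sq_add_cos_sq θ

theorem polytrope_dispersion (hg : g ≠ 0) (hm : m ≠ 0) (hkh : kh ≠ 0)
    (ha : a = ω ^ 2 * m / (2 * kh ^ 2 * g)) (hb : b ^ 2 = a ^ 2 - m * (m + 2) / (4 * kh ^ 2))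
    {θ : ℝ} (hz : a + b * sin θ ≠ 0) :
    kh ^ 2 + (kh * b * cos θ / (a + b * sin θ)) ^ 2
      = (ω ^ 2 - g * (m + 2) / (4 * (a + b * sin θ))) / (g * (a + b * sin θ) / m) := by
  have hω : ω ^ 2 = 2 * kh ^ 2 * g * a / m := by rw [ha]; field_simp
  have hab : 4 * kh ^ 2 * (a ^ 2 - b ^ 2) = m * (m + 2) := by rw [hb]; field_simp; ring
  field_simp
  rw [hω]
  field_simp
  linear_combination 4 * kh ^ 2 * sq_add_sin_add_sq_mul_cos (a := a) (b := b) θ - hab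

end PolytropeAlgebra

/-- The explicit parametric ray solution for the polytrope model
(`c²(z) = gz/m`, `ω_ac²(z) = g(m+2)/(4z)`): with `a = ω²m/(2k_h²g)`,
`b = √(a² - m(m+2)/(4k_h²))`, `λ = k_h g/(ωm)`, the functions
`α(t) = λt + α₀`, `z(t) = a + b sin α(t)`,
`x(t) = (ω/(2k_h))t - b cos α(t) + C_x`, `k_z(t) = k_h b cos α(t)/z(t)`
satisfy, on any interval where `z(t) > 0`:
(i) `dz/dt = (gz/(ωm)) k_z`, (ii) `dx/dt = (gz/(ωm)) k_h`, and
(iii) the dispersion relation `k_h² + k_z² = (ω² - ω_ac²(z))/c²(z)`. -/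
theorem polytrope_ray_parametric_solution
    (g m ω kh α0 Cx : ℝ) (hg : 0 < g) (hm : 0 < m) (hω : 0 < ω) (hkh : 0 < kh)
    (a b2 b lam : ℝ)
    (ha : a = ω ^ 2 * m / (2 * kh ^ 2 * g))
    (hb2 : b2 = a ^ 2 - m * (m + 2) / (4 * kh ^ 2)) (hb2nn : 0 ≤ b2)
    (hb : b = Real.sqrt b2)
    (hlam : lam = kh * g / (ω * m))
    (I : Set ℝ)
    (α z x kz : ℝ → ℝ)
    (hα : ∀ t, α t = lam * t + α0)
    (hz : ∀ t, z t = a + b * Real.sin (α t))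
    (hx : ∀ t, x t = (ω / (2 * kh)) * t - b * Real.cos (α t) + Cx)
    (hkz : ∀ t, kz t = kh * b * Real.cos (α t) / z t)
    (hpos : ∀ t ∈ I, 0 < z t) :
    ∀ t ∈ I,
      HasDerivAt z ((g * z t / (ω * m)) * kz t) t ∧
      HasDerivAt x ((g * z t / (ω * m)) * kh) t ∧
      kh ^ 2 + (kz t) ^ 2
        = (ω ^ 2 - g * (m + 2) / (4 * z t)) / (g * z t / m) := by
  intro t ht
  have hzt : z t ≠ 0 := (hpos t ht).ne'
  have hαd : HasDerivAt α lam t := by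
    rw [funext hα]
    simpa using ((hasDerivAt_id t).const_mul lam).add_const α0
  have hzd : HasDerivAt z (b * (cos (α t) * lam)) t := by
    rw [funext hz]
    exact (hαd.sin.const_mul b).const_add a
  have hxd : HasDerivAt x (ω / (2 * kh) * 1 - b * (-sin (α t) * lam)) t := by
    rw [funext hx]
    exact (((hasDerivAt_id t).const_mul _).sub (hαd.cos.const_mul b)).add_const Cx
  have hcenter := polytrope_rate_mul_center hg.ne' hm.ne' hω.ne' hkh.ne' ha
  refine ⟨?_, ?_, ?_⟩
  · convert hzd using 1
    rw [hkz, hlam]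
    field_simp
  · convert hxd using 1
    rw [hz, hlam]
    linear_combination hcenter
  · rw [hz] at hzt
    rw [hkz, hz]
    exact polytrope_dispersion hg.ne' hm.ne' hkh.ne' ha (by rw [hb, sq_sqrt hb2nn, hb2]) hzt
end

section
/- Let ξ > 1 with ξ ≠ 2 and z_s > 0. For θ ∈ (−π/2, π/2) define a(θ) = ξ·z_s/(2cos²θ), b(θ) = (z_s/(2cos²θ))·√((ξ−2)² + 4(ξ−1)sin²θ), α₀(θ) = σπ/2 − θ + arctan((ξ/(ξ−2))tan θ) with σ = +1 if ξ < 2 and σ = −1 if ξ > 2, and define X(θ, α) = a(θ)·(α − α₀(θ)) − b(θ)·(cos α − cos α₀(θ)), Z(θ, α) = a(θ) + b(θ)·sin α. Then for all θ ∈ (−π/2, π/2) and α ∈ ℝ, the Jacobian determinant (∂X/∂θ)(∂Z/∂α) − (∂X/∂α)(∂Z/∂θ) equals J(θ, α) := b·cos α · ( 2a(α − α₀)·tan θ − a·α₀'(θ) + z_s(1 + tan²θ) ) − (tan θ / b)·( (a³ + 3ab²)·sin α + 3a²b + b³ ), where a = a(θ), b = b(θ), α₀ = α₀(θ). -/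
/-!
The amplitude `b` and the angle `α₀` are polar coordinates of `(z_s tan θ, z_s - a)`:
`b cos α₀ = z_s tan θ` and `b sin α₀ = z_s - a`. Differentiating both identities in `θ` yields
`b b' = tan θ (a² + b²)` and `b' cos α₀ - b α₀' sin α₀ = z_s (1 + tan² θ)`, which is all that is
needed of `α₀'`: with `a' = 2 a tan θ` the formula becomes an algebraic identity.
-/

open Real Filter Topology

section RayJacobian

variable {a b α0 : ℝ → ℝ} {θ : ℝ}

theorem ray_jacobian_eq (α : ℝ) (ha : DifferentiableAt ℝ a θ) (hb : DifferentiableAt ℝ b θ)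
    (hα0 : DifferentiableAt ℝ α0 θ) :
    deriv (fun θ' => a θ' * (α - α0 θ') - b θ' * (cos α - cos (α0 θ'))) θ
        * deriv (fun α' => a θ + b θ * sin α') α
      - deriv (fun α' => a θ * (α' - α0 θ) - b θ * (cos α' - cos (α0 θ))) α
        * deriv (fun θ' => a θ' + b θ' * sin α) θ
    = (deriv a θ * (α - α0 θ) - a θ * deriv α0 θ - deriv b θ * (cos α - cos (α0 θ))
          - b θ * sin (α0 θ) * deriv α0 θ) * (b θ * cos α)
      - (a θ + b θ * sin α) * (deriv a θ + deriv b θ * sin α) := by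
  have hXθ : HasDerivAt (fun θ' => a θ' * (α - α0 θ') - b θ' * (cos α - cos (α0 θ'))) _ θ :=
    (ha.hasDerivAt.mul (hα0.hasDerivAt.const_sub α)).sub
    (hb.hasDerivAt.mul (hα0.hasDerivAt.cos.const_sub (cos α)))
  have hZθ : HasDerivAt (fun θ' => a θ' + b θ' * sin α) _ θ :=
    ha.hasDerivAt.add (hb.hasDerivAt.mul_const (sin α))
  have hXα : HasDerivAt (fun α' => a θ * (α' - α0 θ) - b θ * (cos α' - cos (α0 θ))) _ α :=
    (((hasDerivAt_id α).sub_const (α0 θ)).const_mul (a θ)).sub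
    (((hasDerivAt_cos α).sub_const (cos (α0 θ))).const_mul (b θ))
  have hZα := ((hasDerivAt_sin α).const_mul (b θ)).const_add (a θ)
  rw [hXθ.deriv, hZθ.deriv, hXα.deriv, hZα.deriv]
  ring

theorem deriv_polar_of_eventuallyEq {u v : ℝ → ℝ} {u' v' : ℝ} (hb : DifferentiableAt ℝ b θ)
    (hα0 : DifferentiableAt ℝ α0 θ) (hu : HasDerivAt u u' θ) (hv : HasDerivAt v v' θ)
    (hcos : (fun x => b x * cos (α0 x)) =ᶠ[𝓝 θ] u)
    (hsin : (fun x => b x * sin (α0 x)) =ᶠ[𝓝 θ] v) :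
    deriv b θ * cos (α0 θ) - b θ * sin (α0 θ) * deriv α0 θ = u' ∧
      deriv b θ * sin (α0 θ) + b θ * cos (α0 θ) * deriv α0 θ = v' := by
  constructor
  · have h := (hb.hasDerivAt.mul hα0.hasDerivAt.cos).congr_of_eventuallyEq hcos.symm
    rw [← h.unique hu]
    ring
  · have h := (hb.hasDerivAt.mul hα0.hasDerivAt.sin).congr_of_eventuallyEq hsin.symm
    rw [← h.unique hv]
    ring

end RayJacobian

theorem ray_jacobian_closed_form_of_polar {a b α0 a' b' α0' t zs α : ℝ} (hb : b ≠ 0)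
    (ha' : a' = 2 * a * t) (hcos : b * cos α0 = zs * t) (hsin : b * sin α0 = zs - a)
    (hcos' : b' * cos α0 - b * sin α0 * α0' = zs * (1 + t ^ 2))
    (hsin' : b' * sin α0 + b * cos α0 * α0' = -a') :
    (a' * (α - α0) - a * α0' - b' * (cos α - cos α0) - b * sin α0 * α0') * (b * cos α)
        - (a + b * sin α) * (a' + b' * sin α)
      = b * cos α * (2 * a * (α - α0) * t - a * α0' + zs * (1 + t ^ 2))
        - (t / b) * ((a ^ 3 + 3 * a * b ^ 2) * sin α + 3 * a ^ 2 * b + b ^ 3) := by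
  have hbb' : b * b' = t * (a ^ 2 + b ^ 2) := by
    have hb2 : b ^ 2 = (zs - a) ^ 2 + (zs * t) ^ 2 := by
      rw [← hsin, ← hcos]; linear_combination b ^ 2 * (sin_sq_add_cos_sq α0).symm
    linear_combination (b * sin α0) * hsin' + (b * cos α0) * hcos'
      - b * b' * sin_sq_add_cos_sq α0 - a' * hsin + zs * (1 + t ^ 2) * hcos - (zs - a) * ha'
      - t * hb2
  subst ha'
  field_simp
  linear_combination (b ^ 2 * cos α) * hcos' - (b + a * sin α) * hbb'
    - b ^ 2 * b' * sin_sq_add_cos_sq α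

noncomputable def polytropeA (ξ zs θ : ℝ) : ℝ := ξ * zs / (2 * cos θ ^ 2)

noncomputable def polytropeB (ξ zs θ : ℝ) : ℝ :=
  zs / (2 * cos θ ^ 2) * √((ξ - 2) ^ 2 + 4 * (ξ - 1) * sin θ ^ 2)

noncomputable def polytropeAlpha0 (ξ σ θ : ℝ) : ℝ :=
  σ * π / 2 - θ + arctan (ξ / (ξ - 2) * tan θ)

section Polytrope

variable {ξ zs σ θ : ℝ}

theorem polytrope_radicand_pos (hξ : 1 ≤ ξ) (hξ2 : ξ ≠ 2) :
    0 < (ξ - 2) ^ 2 + 4 * (ξ - 1) * sin θ ^ 2 := by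
  have : 0 < (ξ - 2) ^ 2 := by positivity
  have : 0 ≤ 4 * (ξ - 1) * sin θ ^ 2 := by have := sub_nonneg.2 hξ; positivity
  linarith

theorem hasDerivAt_polytropeA (hc : cos θ ≠ 0) :
    HasDerivAt (polytropeA ξ zs) (2 * polytropeA ξ zs θ * tan θ) θ := by
  have h := (hasDerivAt_const θ (ξ * zs)).div (((hasDerivAt_cos θ).pow 2).const_mul 2)
    (by simp [hc])
  refine h.congr_deriv ?_
  rw [polytropeA, tan_eq_sin_div_cos, Pi.pow_apply]
  field_simp
  ring

theorem differentiableAt_polytropeB (hξ : 1 ≤ ξ) (hξ2 : ξ ≠ 2) (hc : cos θ ≠ 0) :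
    DifferentiableAt ℝ (polytropeB ξ zs) θ := by
  unfold polytropeB
  have := (polytrope_radicand_pos (θ := θ) hξ hξ2).ne'
  have : 2 * cos θ ^ 2 ≠ 0 := by positivity
  fun_prop (disch := assumption)

theorem differentiableAt_polytropeAlpha0 (hc : cos θ ≠ 0) :
    DifferentiableAt ℝ (polytropeAlpha0 ξ σ) θ := by
  unfold polytropeAlpha0
  have := differentiableAt_tan.2 hc
  have := differentiable_arctan
  fun_prop

theorem cos_arctan_mul_tan_mul_sqrt (k : ℝ) (hc : 0 < cos θ) :
    cos (arctan (k * tan θ)) * √(cos θ ^ 2 + k ^ 2 * sin θ ^ 2) = cos θ := by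
  have : cos θ ^ 2 + k ^ 2 * sin θ ^ 2 = cos θ ^ 2 * (1 + (k * tan θ) ^ 2) := by
    rw [tan_eq_sin_div_cos]; field_simp
  rw [this, sqrt_mul (sq_nonneg _), sqrt_sq hc.le, cos_arctan]
  field_simp

theorem sqrt_mul_cos_sin_polytropeAlpha0 (hξ2 : ξ ≠ 2)
    (hσ : (ξ < 2 ∧ σ = 1) ∨ (2 < ξ ∧ σ = -1)) (hc : 0 < cos θ) :
    √((ξ - 2) ^ 2 + 4 * (ξ - 1) * sin θ ^ 2) * cos (polytropeAlpha0 ξ σ θ)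
        = 2 * sin θ * cos θ ∧
      √((ξ - 2) ^ 2 + 4 * (ξ - 1) * sin θ ^ 2) * sin (polytropeAlpha0 ξ σ θ)
        = 2 * cos θ ^ 2 - ξ := by
  set k := ξ / (ξ - 2)
  set φ := arctan (k * tan θ)
  set q := √(cos θ ^ 2 + k ^ 2 * sin θ ^ 2)
  have hk : (ξ - 2) * k = ξ := mul_div_cancel₀ ξ (sub_ne_zero.2 hξ2)
  have hq : cos φ * q = cos θ := cos_arctan_mul_tan_mul_sqrt k hc
  have hsφ : sin φ = k * tan θ * cos φ := by rw [sin_arctan, cos_arctan]; ring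
  have htc : tan θ * cos θ = sin θ := tan_mul_cos hc.ne'
  have hσ2 : σ ^ 2 = 1 := by rcases hσ with ⟨_, rfl⟩ | ⟨_, rfl⟩ <;> norm_num
  have hσξ : 0 < σ * (2 - ξ) := by rcases hσ with ⟨hξ, rfl⟩ | ⟨hξ, rfl⟩ <;> linarith
  have hσcos : cos (σ * (π / 2)) = 0 := by rcases hσ with ⟨_, rfl⟩ | ⟨_, rfl⟩ <;> simp
  have hσsin : sin (σ * (π / 2)) = σ := by rcases hσ with ⟨_, rfl⟩ | ⟨_, rfl⟩ <;> simp
  have hr : √((ξ - 2) ^ 2 + 4 * (ξ - 1) * sin θ ^ 2) = σ * (2 - ξ) * q := by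
    have : (ξ - 2) ^ 2 + 4 * (ξ - 1) * sin θ ^ 2
        = (σ * (2 - ξ)) ^ 2 * (cos θ ^ 2 + k ^ 2 * sin θ ^ 2) := by
      linear_combination (-(ξ - 2) ^ 2) * sin_sq_add_cos_sq θ
        - (2 - ξ) ^ 2 * (cos θ ^ 2 + k ^ 2 * sin θ ^ 2) * hσ2
        - sin θ ^ 2 * ((ξ - 2) * k + ξ) * hk
    rw [this, sqrt_mul (sq_nonneg _), sqrt_sq hσξ.le]
  have hα0 : polytropeAlpha0 ξ σ θ = σ * (π / 2) + (φ - θ) := by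
    change σ * π / 2 - θ + φ = _
    ring
  clear_value k φ q
  rw [hr, hα0, cos_add, sin_add, hσcos, hσsin, cos_sub, sin_sub, hsφ]
  constructor
  · linear_combination (-(2 - ξ) * q * cos φ * (k * tan θ * cos θ - sin θ)) * hσ2
      - (2 - ξ) * (k * tan θ * cos θ - sin θ) * hq - (2 - ξ) * cos θ * k * htc
      + cos θ * sin θ * hk
  · linear_combination (2 - ξ) * q * cos φ * (cos θ + k * tan θ * sin θ) * hσ2
      + (2 - ξ) * (cos θ + k * tan θ * sin θ) * hq + (2 - ξ) * k * sin θ * htc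
      - sin θ ^ 2 * hk - ξ * sin_sq_add_cos_sq θ

theorem polytropeB_pos (hξ : 1 ≤ ξ) (hξ2 : ξ ≠ 2) (hzs : 0 < zs) (hc : 0 < cos θ) :
    0 < polytropeB ξ zs θ :=
  mul_pos (div_pos hzs (by positivity)) (sqrt_pos.2 (polytrope_radicand_pos hξ hξ2))

theorem polytropeB_mul_cos_polytropeAlpha0 (hξ2 : ξ ≠ 2)
    (hσ : (ξ < 2 ∧ σ = 1) ∨ (2 < ξ ∧ σ = -1)) (hc : 0 < cos θ) :
    polytropeB ξ zs θ * cos (polytropeAlpha0 ξ σ θ) = zs * tan θ := by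
  rw [polytropeB, mul_assoc, (sqrt_mul_cos_sin_polytropeAlpha0 hξ2 hσ hc).1, tan_eq_sin_div_cos]
  field_simp

theorem polytropeB_mul_sin_polytropeAlpha0 (hξ2 : ξ ≠ 2)
    (hσ : (ξ < 2 ∧ σ = 1) ∨ (2 < ξ ∧ σ = -1)) (hc : 0 < cos θ) :
    polytropeB ξ zs θ * sin (polytropeAlpha0 ξ σ θ) = zs - polytropeA ξ zs θ := by
  rw [polytropeB, mul_assoc, (sqrt_mul_cos_sin_polytropeAlpha0 hξ2 hσ hc).2, polytropeA]
  field_simp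

end Polytrope

/-- The scaled Jacobian of the ray-to-Cartesian coordinate transform for a
monochromatic point source at depth `z_s` in the polytrope model (paper's
eq. A8): with `a(θ) = ξ z_s/(2cos²θ)`,
`b(θ) = (z_s/(2cos²θ))√((ξ-2)² + 4(ξ-1)sin²θ)`,
`α₀(θ) = σπ/2 - θ + arctan((ξ/(ξ-2)) tan θ)` (`σ = +1` if `ξ < 2`, `σ = -1`
if `ξ > 2`), and the ray map `X(θ,α) = a(α-α₀) - b(cos α - cos α₀)`,
`Z(θ,α) = a + b sin α`, the Jacobian determinant
`∂X/∂θ · ∂Z/∂α - ∂X/∂α · ∂Z/∂θ` equals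
`J(θ,α) = b cos α (2a(α-α₀) tan θ - a α₀'(θ) + z_s(1 + tan²θ))
 - (tan θ/b)((a³ + 3ab²) sin α + 3a²b + b³)`. -/
theorem point_source_jacobian_formula
    (ξ zs : ℝ) (hξ : 1 < ξ) (hξ2 : ξ ≠ 2) (hzs : 0 < zs)
    (σ : ℝ) (hσ : (ξ < 2 ∧ σ = 1) ∨ (2 < ξ ∧ σ = -1))
    (a b α0 : ℝ → ℝ)
    (ha : ∀ θ, a θ = ξ * zs / (2 * Real.cos θ ^ 2))
    (hb : ∀ θ, b θ = zs / (2 * Real.cos θ ^ 2) *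
      Real.sqrt ((ξ - 2) ^ 2 + 4 * (ξ - 1) * Real.sin θ ^ 2))
    (hα0 : ∀ θ, α0 θ = σ * Real.pi / 2 - θ +
      Real.arctan ((ξ / (ξ - 2)) * Real.tan θ))
    (X Z : ℝ → ℝ → ℝ)
    (hX : ∀ θ α, X θ α = a θ * (α - α0 θ)
      - b θ * (Real.cos α - Real.cos (α0 θ)))
    (hZ : ∀ θ α, Z θ α = a θ + b θ * Real.sin α) :
    ∀ θ ∈ Set.Ioo (-(Real.pi / 2)) (Real.pi / 2), ∀ α : ℝ,
      deriv (fun θ' => X θ' α) θ * deriv (fun α' => Z θ α') α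
        - deriv (fun α' => X θ α') α * deriv (fun θ' => Z θ' α) θ
      = b θ * Real.cos α *
          (2 * a θ * (α - α0 θ) * Real.tan θ - a θ * deriv α0 θ +
            zs * (1 + Real.tan θ ^ 2))
        - (Real.tan θ / b θ) *
            ((a θ ^ 3 + 3 * a θ * b θ ^ 2) * Real.sin α +
              3 * a θ ^ 2 * b θ + b θ ^ 3) := by
  intro θ hθ α
  obtain rfl : a = polytropeA ξ zs := funext ha
  obtain rfl : b = polytropeB ξ zs := funext hb
  obtain rfl : α0 = polytropeAlpha0 ξ σ := funext hα0
  have hc : 0 < cos θ := cos_pos_of_mem_Ioo hθ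
  have hda := hasDerivAt_polytropeA (ξ := ξ) (zs := zs) hc.ne'
  have hdb := differentiableAt_polytropeB (zs := zs) hξ.le hξ2 hc.ne'
  have hdα0 := differentiableAt_polytropeAlpha0 (ξ := ξ) (σ := σ) hc.ne'
  have hdtan : HasDerivAt tan (1 + tan θ ^ 2) θ := by
    simpa [← inv_one_add_tan_sq hc.ne'] using hasDerivAt_tan hc.ne'
  have hcos_pos : ∀ᶠ x in 𝓝 θ, 0 < cos x :=
    eventually_of_mem (Ioo_mem_nhds hθ.1 hθ.2) fun x hx => cos_pos_of_mem_Ioo hx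
  obtain ⟨hcos', hsin'⟩ := deriv_polar_of_eventuallyEq hdb hdα0 (hdtan.const_mul zs)
    (hda.const_sub zs)
    (hcos_pos.mono fun x hx => polytropeB_mul_cos_polytropeAlpha0 hξ2 hσ hx)
    (hcos_pos.mono fun x hx => polytropeB_mul_sin_polytropeAlpha0 hξ2 hσ hx)
  simp only [hX, hZ]
  rw [ray_jacobian_eq α hda.differentiableAt hdb hdα0, hda.deriv]
  exact ray_jacobian_closed_form_of_polar (polytropeB_pos hξ.le hξ2 hzs hc).ne' rfl
    (polytropeB_mul_cos_polytropeAlpha0 hξ2 hσ hc) (polytropeB_mul_sin_polytropeAlpha0 hξ2 hσ hc)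
    hcos' hsin'
end

section
/- Let ξ > 1 with ξ ≠ 2 and z_s > 0. With a(0) = ξ·z_s/2, tan 0 = 0, and α₀'(0) = 2/(ξ−2) (the value at θ = 0 of the derivative formula dα₀/dθ = −1 + ξ(ξ−2)/((ξ−2)² + 4(ξ−1)sin²θ)), the scaled Jacobian at θ = 0 satisfies, for every α ∈ ℝ and b ∈ ℝ: J(0, α) = b·cos α·( −a(0)·α₀'(0) + z_s ) = b·z_s·cos α·(1 − ξ/(ξ−2)) = −2b·z_s·cos α/(ξ−2). Consequently J(0, α) = 0 exactly when cos α = 0, i.e. the ray with take-off angle θ = 0 touches caustics only at its turning points. -/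
open Real

/-- `a`, `α0`, `dα0` stand for the values `a(θ)`, `α₀(θ)`, `α₀'(θ)` at the take-off angle `θ`. -/
noncomputable def scaledJacobian (zs a α0 dα0 b θ α : ℝ) : ℝ :=
  b * cos α * (2 * a * (α - α0) * tan θ - a * dα0 + zs * (1 + tan θ ^ 2))
    - (tan θ / b) * ((a ^ 3 + 3 * a * b ^ 2) * sin α + 3 * a ^ 2 * b + b ^ 3)

theorem scaledJacobian_of_tan_eq_zero {zs a α0 dα0 b θ α : ℝ} (hθ : tan θ = 0) :
    scaledJacobian zs a α0 dα0 b θ α = b * cos α * (-(a * dα0) + zs) := by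
  simp only [scaledJacobian, hθ]
  ring

theorem neg_one_add_mul_sub_two_div_sq {ξ : ℝ} (hξ2 : ξ ≠ 2) :
    -1 + ξ * (ξ - 2) / (ξ - 2) ^ 2 = 2 / (ξ - 2) := by
  have hd : ξ - 2 ≠ 0 := sub_ne_zero.mpr hξ2
  field_simp
  ring

theorem one_sub_div_sub_two {ξ : ℝ} (hξ2 : ξ ≠ 2) : 1 - ξ / (ξ - 2) = -(2 / (ξ - 2)) := by
  have hd : ξ - 2 ≠ 0 := sub_ne_zero.mpr hξ2
  field_simp
  ring

theorem jacobian_at_zero_takeoff_general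
    (ξ zs : ℝ) (hξ2 : ξ ≠ 2) (hzs : 0 < zs)
    (a0 A : ℝ)
    (ha0 : a0 = ξ * zs / (2 * Real.cos (0 : ℝ) ^ 2))
    (hA : A = -1 + ξ * (ξ - 2) /
      ((ξ - 2) ^ 2 + 4 * (ξ - 1) * Real.sin (0 : ℝ) ^ 2)) :
    A = 2 / (ξ - 2) ∧
    ∀ b α α0v : ℝ,
      (b * Real.cos α *
          (2 * a0 * (α - α0v) * Real.tan 0 - a0 * A +
            zs * (1 + Real.tan (0 : ℝ) ^ 2))
        - (Real.tan (0 : ℝ) / b) *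
            ((a0 ^ 3 + 3 * a0 * b ^ 2) * Real.sin α + 3 * a0 ^ 2 * b + b ^ 3)
        = b * Real.cos α * (-(a0 * A) + zs)) ∧
      b * Real.cos α * (-(a0 * A) + zs)
        = b * zs * Real.cos α * (1 - ξ / (ξ - 2)) ∧
      b * Real.cos α * (-(a0 * A) + zs)
        = -(2 * b * zs * Real.cos α / (ξ - 2)) ∧
      (b ≠ 0 → (b * Real.cos α * (-(a0 * A) + zs) = 0 ↔ Real.cos α = 0)) := by
  have hA' : A = 2 / (ξ - 2) := by
    simpa [hA] using neg_one_add_mul_sub_two_div_sq hξ2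
  have hfactor : -(a0 * A) + zs = zs * (1 - ξ / (ξ - 2)) := by
    rw [ha0, hA', cos_zero]
    ring
  have hfactor_ne : zs * (1 - ξ / (ξ - 2)) ≠ 0 := by
    rw [one_sub_div_sub_two hξ2]
    exact mul_ne_zero hzs.ne' (neg_ne_zero.mpr (div_ne_zero two_ne_zero (sub_ne_zero.mpr hξ2)))
  refine ⟨hA', fun b α α0v => ⟨scaledJacobian_of_tan_eq_zero tan_zero, ?_, ?_, fun hb => ?_⟩⟩
  · rw [hfactor]; ring
  · rw [hfactor, one_sub_div_sub_two hξ2]; ring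
  · rw [hfactor]
    simp [hb, hfactor_ne]

/-- The scaled Jacobian at take-off angle `θ = 0`: with `a(0) = ξ z_s/2`
(the value at `θ = 0` of `a(θ) = ξ z_s/(2cos²θ)`), `tan 0 = 0`, and
`α₀'(0) = 2/(ξ-2)` (the value at `θ = 0` of
`dα₀/dθ = -1 + ξ(ξ-2)/((ξ-2)² + 4(ξ-1)sin²θ)`), the Jacobian formula gives,
for every `α` and `b`,
`J(0,α) = b cos α (-a(0) α₀'(0) + z_s) = b z_s cos α (1 - ξ/(ξ-2))
        = -2 b z_s cos α/(ξ-2)`;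
consequently (for `b ≠ 0`) `J(0,α) = 0` exactly when `cos α = 0`, i.e. the
ray with take-off angle `θ = 0` touches caustics only at its turning points. -/
theorem jacobian_at_zero_takeoff
    (ξ zs : ℝ) (hξ : 1 < ξ) (hξ2 : ξ ≠ 2) (hzs : 0 < zs)
    (a0 A : ℝ)
    (ha0 : a0 = ξ * zs / (2 * Real.cos (0 : ℝ) ^ 2))
    (hA : A = -1 + ξ * (ξ - 2) /
      ((ξ - 2) ^ 2 + 4 * (ξ - 1) * Real.sin (0 : ℝ) ^ 2)) :
    A = 2 / (ξ - 2) ∧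
    ∀ b α α0v : ℝ,
      (b * Real.cos α *
          (2 * a0 * (α - α0v) * Real.tan 0 - a0 * A +
            zs * (1 + Real.tan (0 : ℝ) ^ 2))
        - (Real.tan (0 : ℝ) / b) *
            ((a0 ^ 3 + 3 * a0 * b ^ 2) * Real.sin α + 3 * a0 ^ 2 * b + b ^ 3)
        = b * Real.cos α * (-(a0 * A) + zs)) ∧
      b * Real.cos α * (-(a0 * A) + zs)
        = b * zs * Real.cos α * (1 - ξ / (ξ - 2)) ∧
      b * Real.cos α * (-(a0 * A) + zs)
        = -(2 * b * zs * Real.cos α / (ξ - 2)) ∧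
      (b ≠ 0 → (b * Real.cos α * (-(a0 * A) + zs) = 0 ↔ Real.cos α = 0)) :=
  jacobian_at_zero_takeoff_general ξ zs hξ2 hzs a0 A ha0 hA
end

section
/- Let v > c > 0, ω_ac > 0, ω_N > ω_ac, and θ ∈ (0, π/2) with sin²θ > c²/v². Then: (i) the ray frequency ω₀(θ) = ω_ac·sin θ/√(sin²θ − c²/v²) satisfies ω₀(θ) ≤ ω_N if and only if sin²θ ≥ (c²/v²)·ω_N²/(ω_N² − ω_ac²); and (ii) if additionally (1 − ω_ac²/ω_N²)·v² > c², then the minimum of v_ph(θ) = v·tan θ over all θ ∈ (0, π/2) satisfying sin²θ ≥ (c²/v²)·ω_N²/(ω_N² − ω_ac²) equals v·c/√( (1 − ω_ac²/ω_N²)·v² − c² ), attained at sin²θ = (c²/v²)·ω_N²/(ω_N² − ω_ac²). -/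
/-!
Squaring turns `ω₀(θ) ≤ ω_N` into the linear condition `ω_N² (sin²θ - c²/v²) ≥ ω_ac² sin²θ` on
`sin²θ`, i.e. into `sin²θ ≥ K` for the threshold `K = (c²/v²)·ω_N²/(ω_N² - ω_ac²)`. On `(0, π/2)`
the map `θ ↦ tan θ` is increasing and `sin²θ = tan²θ / (1 + tan²θ)`, so `sin²θ ≥ K` is equivalent
to `tan θ ≥ √(K / (1 - K))`, with equality at `θ = arcsin √K`. Finally
`K / (1 - K) = c² / ((1 - ω_ac²/ω_N²) v² - c²)`.
-/

open Real Set

lemma div_sqrt_le_iff_sq_le_mul {x y d : ℝ} (hx : 0 ≤ x) (hy : 0 ≤ y) (hd : 0 < d) :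
    x / √d ≤ y ↔ x ^ 2 ≤ y ^ 2 * d := by
  rw [div_le_iff₀ (sqrt_pos.mpr hd), ← sqrt_sq hy, ← sqrt_mul (sq_nonneg y), sqrt_sq hy,
    le_sqrt hx (by positivity)]

lemma mul_div_sqrt_sub_le_iff {a b q s : ℝ} (ha : 0 ≤ a) (hab : a < b) (hs : 0 ≤ s)
    (hqs : q < s ^ 2) :
    a * s / √(s ^ 2 - q) ≤ b ↔ q * (b ^ 2 / (b ^ 2 - a ^ 2)) ≤ s ^ 2 := by
  have hgap : 0 < b ^ 2 - a ^ 2 := by nlinarith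
  rw [div_sqrt_le_iff_sq_le_mul (by positivity) (by linarith) (by linarith), mul_div_assoc',
    div_le_iff₀ hgap]
  constructor <;> intro h <;> linarith

lemma le_sin_sq_iff_sqrt_le_tan {K θ : ℝ} (hK : K < 1) (hθ : θ ∈ Ioo 0 (π / 2)) :
    K ≤ sin θ ^ 2 ↔ √(K / (1 - K)) ≤ tan θ := by
  have hcos : cos θ ≠ 0 := (cos_pos_of_mem_Ioo ⟨by linarith [hθ.1, pi_pos], hθ.2⟩).ne'
  rw [← tan_sq_div_one_add_tan_sq hcos,
    sqrt_le_left (tan_pos_of_pos_of_lt_pi_div_two hθ.1 hθ.2).le, le_div_iff₀ (by positivity),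
    div_le_iff₀ (by linarith)]
  constructor <;> intro h <;> linarith

lemma arcsin_sqrt_mem_Ioo {K : ℝ} (hK0 : 0 < K) (hK1 : K < 1) :
    arcsin √K ∈ Ioo 0 (π / 2) :=
  ⟨arcsin_pos.mpr (sqrt_pos.mpr hK0),
    arcsin_lt_pi_div_two.mpr ((sqrt_lt' one_pos).mpr (by linarith))⟩

lemma sin_sq_arcsin_sqrt {K : ℝ} (hK0 : 0 ≤ K) (hK1 : K ≤ 1) : sin (arcsin √K) ^ 2 = K := by
  rw [sin_arcsin (by linarith [sqrt_nonneg K]) (sqrt_le_one.mpr hK1), sq_sqrt hK0]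

lemma tan_arcsin_sqrt {K : ℝ} (hK0 : 0 ≤ K) (hK1 : K ≤ 1) :
    tan (arcsin √K) = √(K / (1 - K)) := by
  rw [tan_arcsin, sq_sqrt hK0, sqrt_div' _ (by linarith)]

lemma isLeast_mul_tan_of_le_sin_sq {K v : ℝ} (hK0 : 0 < K) (hK1 : K < 1) (hv : 0 < v) :
    IsLeast {y | ∃ θ ∈ Ioo 0 (π / 2), K ≤ sin θ ^ 2 ∧ y = v * tan θ} (v * √(K / (1 - K))) := by
  refine ⟨⟨arcsin √K, arcsin_sqrt_mem_Ioo hK0 hK1, (sin_sq_arcsin_sqrt hK0.le hK1.le).ge,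
    by rw [tan_arcsin_sqrt hK0.le hK1.le]⟩, ?_⟩
  rintro y ⟨θ, hθ, hKθ, rfl⟩
  exact mul_le_mul_of_nonneg_left ((le_sin_sq_iff_sqrt_le_tan hK1 hθ).mp hKθ) hv.le

lemma threshold_lt_one {a b c v : ℝ} (hb : b ≠ 0) (hv : v ≠ 0) (hab : a ^ 2 < b ^ 2)
    (h : c ^ 2 < (1 - a ^ 2 / b ^ 2) * v ^ 2) :
    c ^ 2 / v ^ 2 * (b ^ 2 / (b ^ 2 - a ^ 2)) < 1 := by
  rw [div_mul_div_comm, div_lt_one (by have := sub_pos.mpr hab; positivity)]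
  rw [one_sub_div (pow_ne_zero 2 hb), div_mul_eq_mul_div, lt_div_iff₀ (by positivity)] at h
  linarith

lemma threshold_div_one_sub {a b c v : ℝ} (hb : b ≠ 0) (hv : v ≠ 0) (hab : a ^ 2 < b ^ 2)
    (h : c ^ 2 < (1 - a ^ 2 / b ^ 2) * v ^ 2) :
    c ^ 2 / v ^ 2 * (b ^ 2 / (b ^ 2 - a ^ 2)) / (1 - c ^ 2 / v ^ 2 * (b ^ 2 / (b ^ 2 - a ^ 2)))
      = c ^ 2 / ((1 - a ^ 2 / b ^ 2) * v ^ 2 - c ^ 2) := by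
  have h1 : (1 - a ^ 2 / b ^ 2) * v ^ 2 - c ^ 2 ≠ 0 := by linarith
  have h2 : b ^ 2 - a ^ 2 ≠ 0 := by linarith
  have h3 := (sub_pos.mpr (threshold_lt_one hb hv hab h)).ne'
  field_simp

/-- Minimum observable phase speed for a vertically downward moving
supersonic source observed below a Nyquist frequency `ω_N`: for
`v > c > 0`, `ω_N > ω_ac > 0`, and `θ ∈ (0, π/2)` with `sin²θ > c²/v²`:
(i) the ray frequency `ω₀(θ) = ω_ac sin θ/√(sin²θ - c²/v²)` satisfies
`ω₀(θ) ≤ ω_N` iff `sin²θ ≥ (c²/v²)·ω_N²/(ω_N² - ω_ac²)`;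
(ii) if moreover `(1 - ω_ac²/ω_N²)v² > c²`, the minimum of `v tan θ'` over
`θ' ∈ (0, π/2)` with `sin²θ' ≥ (c²/v²)·ω_N²/(ω_N² - ω_ac²)` equals
`vc/√((1 - ω_ac²/ω_N²)v² - c²)`, attained at
`sin²θ' = (c²/v²)·ω_N²/(ω_N² - ω_ac²)`. -/
theorem min_observable_phase_speed
    (v c ωac ωN : ℝ) (hc : 0 < c) (hvc : c < v) (hωac : 0 < ωac)
    (hωN : ωac < ωN)
    (θ : ℝ) (hθ : θ ∈ Set.Ioo (0 : ℝ) (Real.pi / 2))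
    (hss : c ^ 2 / v ^ 2 < Real.sin θ ^ 2) :
    (ωac * Real.sin θ / Real.sqrt (Real.sin θ ^ 2 - c ^ 2 / v ^ 2) ≤ ωN ↔
      c ^ 2 / v ^ 2 * (ωN ^ 2 / (ωN ^ 2 - ωac ^ 2)) ≤ Real.sin θ ^ 2) ∧
    (c ^ 2 < (1 - ωac ^ 2 / ωN ^ 2) * v ^ 2 →
      IsLeast { y : ℝ | ∃ θ' ∈ Set.Ioo (0 : ℝ) (Real.pi / 2),
          c ^ 2 / v ^ 2 * (ωN ^ 2 / (ωN ^ 2 - ωac ^ 2)) ≤ Real.sin θ' ^ 2 ∧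
          y = v * Real.tan θ' }
        (v * c / Real.sqrt ((1 - ωac ^ 2 / ωN ^ 2) * v ^ 2 - c ^ 2)) ∧
      ∃ θ' ∈ Set.Ioo (0 : ℝ) (Real.pi / 2),
        Real.sin θ' ^ 2 = c ^ 2 / v ^ 2 * (ωN ^ 2 / (ωN ^ 2 - ωac ^ 2)) ∧
        v * Real.tan θ'
          = v * c / Real.sqrt ((1 - ωac ^ 2 / ωN ^ 2) * v ^ 2 - c ^ 2)) := by
  have hsin : 0 ≤ sin θ := (sin_pos_of_pos_of_lt_pi hθ.1 (by linarith [hθ.2, pi_pos])).le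
  refine ⟨mul_div_sqrt_sub_le_iff hωac.le hωN hsin hss, fun hD => ?_⟩
  have hv : 0 < v := hc.trans hvc
  have hωN0 : ωN ≠ 0 := (hωac.trans hωN).ne'
  have hab : ωac ^ 2 < ωN ^ 2 := pow_lt_pow_left₀ hωN hωac.le two_ne_zero
  set K := c ^ 2 / v ^ 2 * (ωN ^ 2 / (ωN ^ 2 - ωac ^ 2))
  have hK0 : 0 < K := by have := sub_pos.mpr hab; positivity
  have hK1 : K < 1 := threshold_lt_one hωN0 hv.ne' hab hD
  have hspeed : v * c / √((1 - ωac ^ 2 / ωN ^ 2) * v ^ 2 - c ^ 2) = v * √(K / (1 - K)) := by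
    rw [threshold_div_one_sub hωN0 hv.ne' hab hD, sqrt_div' _ (by linarith), sqrt_sq hc.le,
      mul_div_assoc]
  rw [hspeed]
  exact ⟨isLeast_mul_tan_of_le_sin_sq hK0 hK1 hv, arcsin √K, arcsin_sqrt_mem_Ioo hK0 hK1,
    sin_sq_arcsin_sqrt hK0.le hK1.le, by rw [tan_arcsin_sqrt hK0.le hK1.le]⟩
end
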